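/- arXiv:1803.00683 — 5 statements merged into one kernel-verified Lean document; each statement's English description precedes it below -/
import Mathlib

section
/- Let A ≥ 0, B ≥ 0, K > 0 and P > 0 be real numbers, and define η(p) = (A + B·p)/log₂(1 + K·p). Then η is quasiconvex on the interval (0, P], i.e., for every real a the set {p ∈ (0, P] : η(p) ≤ a} is convex. -/
/-!
A nonnegative convex function divided by a positive concave one is quasiconvex: below a negative
level there is nothing, and for `a ≥ 0` the sublevel set `{f / g ≤ a}` is `{f - a g ≤ 0}`, a
sublevel set of a convex function. Here `f = A + B p` is affine and `g = log₂ (1 + K p)` is concave.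
-/

open Set Real

theorem ConvexOn.quasiconvexOn_div {E : Type*} [AddCommGroup E] [Module ℝ E] {s : Set E}
    {f g : E → ℝ} (hf : ConvexOn ℝ s f) (hg : ConcaveOn ℝ s g) (hf₀ : ∀ x ∈ s, 0 ≤ f x)
    (hg₀ : ∀ x ∈ s, 0 < g x) : QuasiconvexOn ℝ s fun x => f x / g x := by
  intro a
  rcases lt_or_ge a 0 with ha | ha
  · convert convex_empty (𝕜 := ℝ) (E := E)
    refine eq_empty_of_forall_notMem fun x ⟨hx, hxa⟩ => ?_
    exact (div_nonneg (hf₀ x hx) (hg₀ x hx).le).not_gt (hxa.trans_lt ha)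
  · convert (hf.sub (hg.smul ha)).convex_le 0 using 1
    refine sep_ext_iff.2 fun x hx => ?_
    simp only [Pi.sub_apply, smul_eq_mul, sub_nonpos]
    exact div_le_iff₀ (hg₀ x hx)

theorem concaveOn_logb {b : ℝ} (hb : 1 ≤ b) : ConcaveOn ℝ (Ioi 0) (logb b) := by
  refine (strictConcaveOn_log_Ioi.concaveOn.smul (inv_nonneg.2 (log_nonneg hb))).congr fun x _ => ?_
  simp only [smul_eq_mul, inv_mul_eq_div, logb]

theorem concaveOn_logb_one_add_mul {b K : ℝ} (hb : 1 ≤ b) (hK : 0 ≤ K) :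
    ConcaveOn ℝ (Ici 0) fun p => logb b (1 + K * p) := by
  refine ⟨convex_Ici 0, fun x hx y hy s t hs ht hst => ?_⟩
  have hmem : ∀ z ∈ Ici (0 : ℝ), 1 + K * z ∈ Ioi 0 := fun z hz => by
    simp only [mem_Ioi]; nlinarith [mem_Ici.1 hz]
  have key := (concaveOn_logb hb).2 (hmem x hx) (hmem y hy) hs ht hst
  have hcomb : s • (1 + K * x) + t • (1 + K * y) = 1 + K * (s • x + t • y) := by
    simp only [smul_eq_mul]; linear_combination hst
  rwa [hcomb] at key

theorem eta_quasiconvex_general (A B K P : ℝ) (hA : 0 ≤ A) (hB : 0 ≤ B) (hK : 0 < K) :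
    ∀ a : ℝ, Convex ℝ {p : ℝ | p ∈ Set.Ioc (0 : ℝ) P ∧
      (A + B * p) / Real.logb 2 (1 + K * p) ≤ a} := by
  have hsub : Ioc 0 P ⊆ Ici (0 : ℝ) := Ioc_subset_Icc_self.trans Icc_subset_Ici_self
  have hnum : ConvexOn ℝ (Ioc 0 P) fun p => A + B * p :=
    ((convexOn_id (convex_Ioc 0 P)).smul hB).add_const A |>.congr fun p _ => by simp [add_comm]
  have hden : ConcaveOn ℝ (Ioc 0 P) fun p => logb 2 (1 + K * p) :=
    (concaveOn_logb_one_add_mul one_le_two hK.le).subset hsub (convex_Ioc 0 P)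
  exact hnum.quasiconvexOn_div hden (fun p hp => by nlinarith [hp.1])
    fun p hp => logb_pos one_lt_two (by nlinarith [hp.1])

/-- Quasiconvexity of the transmit-power objective η(p) = (A + B·p)/log₂(1 + K·p)
on the interval (0, P]: every sublevel set is convex. -/
theorem eta_quasiconvex (A B K P : ℝ) (hA : 0 ≤ A) (hB : 0 ≤ B) (hK : 0 < K) (hP : 0 < P) :
    ∀ a : ℝ, Convex ℝ {p : ℝ | p ∈ Set.Ioc (0 : ℝ) P ∧
      (A + B * p) / Real.logb 2 (1 + K * p) ≤ a} :=
  eta_quasiconvex_general A B K P hA hB hK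
end

section
/- Let A > 0, B ≥ 0 and K > 0, and define φ(p) = B·log₂(1 + K·p) − (K/ln 2)·(A + B·p)/(1 + K·p). Then φ(0) = −K·A/ln 2 < 0 and φ is strictly increasing on [0, ∞). -/
open Real Set

namespace PowerAllocation

noncomputable def phi (A B K p : ℝ) : ℝ :=
  B * logb 2 (1 + K * p) - K / log 2 * ((A + B * p) / (1 + K * p))

theorem phi_zero (A B K : ℝ) : phi A B K 0 = -(K * A) / log 2 := by
  simp only [phi, mul_zero, add_zero, logb_one, div_one]
  ring

/-- The `B * K / (1 + K * p)` contributions of the logarithm and of the quotient cancel. -/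
theorem hasDerivAt_phi (A B : ℝ) {K p : ℝ} (hp : 1 + K * p ≠ 0) :
    HasDerivAt (phi A B K) (K ^ 2 * (A + B * p) / (log 2 * (1 + K * p) ^ 2)) p := by
  have haffine (c d : ℝ) : HasDerivAt (fun q : ℝ => c + d * q) d p := by
    simpa using ((hasDerivAt_id p).const_mul d).const_add c
  have hlog := (((haffine 1 K).log hp).const_mul B).div_const (log 2)
  have hquot := ((haffine A B).div (haffine 1 K) hp).const_mul (K / log 2)
  have hphi : phi A B K = (fun q => B * log (1 + K * q) / log 2) -
      fun q => K / log 2 * ((fun q => A + B * q) / fun q => 1 + K * q) q := by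
    funext q
    simp only [phi, logb, Pi.sub_apply, Pi.div_apply]
    ring
  rw [hphi]
  refine (hlog.sub hquot).congr_deriv ?_
  have hlog2 : log 2 ≠ 0 := (log_pos one_lt_two).ne'
  field_simp
  ring

theorem strictMonoOn_phi {A B K : ℝ} (hA : 0 < A) (hB : 0 ≤ B) (hK : 0 < K) :
    StrictMonoOn (phi A B K) (Ici 0) := by
  have hderiv (p : ℝ) (hp : 0 ≤ p) := hasDerivAt_phi A B (K := K) (p := p) (by positivity)
  refine strictMonoOn_of_hasDerivWithinAt_pos (convex_Ici 0)
    (fun p hp => (hderiv p hp).continuousAt.continuousWithinAt)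
    (fun p hp => (hderiv p (interior_subset hp)).hasDerivWithinAt) fun p hp => ?_
  have hp : 0 < p := by simpa using hp
  have hlog2 : 0 < log 2 := log_pos one_lt_two
  positivity

end PowerAllocation

open PowerAllocation in
/-- For A > 0, B ≥ 0, K > 0, φ(p) = B·log₂(1 + K·p) − (K/ln 2)·(A + B·p)/(1 + K·p)
satisfies φ(0) = −K·A/ln 2 < 0 and φ is strictly increasing on [0, ∞). -/
theorem phi_neg_at_zero_and_strictMono (A B K : ℝ) (hA : 0 < A) (hB : 0 ≤ B) (hK : 0 < K) :
    (fun p : ℝ => B * Real.logb 2 (1 + K * p) -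
        K / Real.log 2 * ((A + B * p) / (1 + K * p))) 0 = -(K * A) / Real.log 2 ∧
    (fun p : ℝ => B * Real.logb 2 (1 + K * p) -
        K / Real.log 2 * ((A + B * p) / (1 + K * p))) 0 < 0 ∧
    StrictMonoOn (fun p : ℝ => B * Real.logb 2 (1 + K * p) -
        K / Real.log 2 * ((A + B * p) / (1 + K * p))) (Set.Ici (0 : ℝ)) := by
  have hneg : -(K * A) / log 2 < 0 :=
    div_neg_of_neg_of_pos (neg_neg_of_pos (mul_pos hK hA)) (log_pos one_lt_two)
  exact ⟨phi_zero A B K, (phi_zero A B K).trans_lt hneg, strictMonoOn_phi hA hB hK⟩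
end

section
/- Let ι be a finite nonempty index set, c : ι → ℝ with cᵢ > 0 for all i, and fᵐᵃˣ > 0. Define f*ᵢ = fᵐᵃˣ·√cᵢ / (Σⱼ √cⱼ). Then f*ᵢ > 0 for all i, Σᵢ f*ᵢ = fᵐᵃˣ, Σᵢ cᵢ/f*ᵢ = (Σᵢ √cᵢ)²/fᵐᵃˣ, and for every f : ι → ℝ with fᵢ > 0 for all i and Σᵢ fᵢ ≤ fᵐᵃˣ one has Σᵢ cᵢ/f*ᵢ ≤ Σᵢ cᵢ/fᵢ; that is, f* is an optimal solution of the computation-resource allocation problem. -/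
/-! Writing `S = ∑ⱼ √cⱼ`, the proportional allocation `f*ᵢ = fᵐᵃˣ √cᵢ / S` has cost
`∑ᵢ √cᵢ · S / fᵐᵃˣ = S² / fᵐᵃˣ`. For any feasible `f`, the Cauchy–Schwarz inequality in
Engel form gives `S² / ∑ᵢ fᵢ ≤ ∑ᵢ cᵢ / fᵢ`, and `∑ᵢ fᵢ ≤ fᵐᵃˣ` makes the left side at least
`S² / fᵐᵃˣ`. -/

open Finset

theorem div_mul_sqrt_div {c : ℝ} (hc : 0 ≤ c) (a b : ℝ) :
    c / (a * √c / b) = √c * b / a := by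
  rcases hc.eq_or_lt with rfl | hc
  · simp
  · have hsqrt : √c ≠ 0 := (Real.sqrt_pos.2 hc).ne'
    calc c / (a * √c / b) = √c * (√c * b) / (√c * a) := by
          rw [div_div_eq_mul_div, ← mul_assoc, Real.mul_self_sqrt hc.le, mul_comm a]
      _ = √c * b / a := mul_div_mul_left _ _ hsqrt

section

variable {ι : Type*} (s : Finset ι)

theorem sum_mul_div_sum_self (a : ℝ) {w : ι → ℝ} (hw : ∑ j ∈ s, w j ≠ 0) :
    ∑ i ∈ s, a * w i / ∑ j ∈ s, w j = a := by
  rw [← sum_div, ← mul_sum, mul_div_assoc, div_self hw, mul_one]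

theorem sum_div_sqrt_allocation {c : ι → ℝ} (hc : ∀ i ∈ s, 0 ≤ c i) (a : ℝ) :
    ∑ i ∈ s, c i / (a * √(c i) / ∑ j ∈ s, √(c j)) = (∑ i ∈ s, √(c i)) ^ 2 / a := by
  rw [sum_congr rfl fun i hi => div_mul_sqrt_div (hc i hi) a _, ← sum_div, ← sum_mul, sq]

theorem sq_sum_sqrt_div_le_sum_div {c f : ι → ℝ} (hc : ∀ i ∈ s, 0 ≤ c i)
    (hf : ∀ i ∈ s, 0 < f i) :
    (∑ i ∈ s, √(c i)) ^ 2 / ∑ i ∈ s, f i ≤ ∑ i ∈ s, c i / f i := by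
  calc (∑ i ∈ s, √(c i)) ^ 2 / ∑ i ∈ s, f i ≤ ∑ i ∈ s, √(c i) ^ 2 / f i :=
        sq_sum_div_le_sum_sq_div s _ hf
    _ = ∑ i ∈ s, c i / f i := sum_congr rfl fun i hi => by rw [Real.sq_sqrt (hc i hi)]

end

/-- The allocation f*ᵢ = fᵐᵃˣ·√cᵢ/Σⱼ√cⱼ is feasible, saturates the capacity,
achieves value (Σᵢ √cᵢ)²/fᵐᵃˣ, and is optimal for the OPT-CRA problem. -/
theorem cra_optimal_allocation (ι : Type*) [Fintype ι] [Nonempty ι]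
    (c : ι → ℝ) (hc : ∀ i, 0 < c i) (fmax : ℝ) (hfmax : 0 < fmax) :
    (∀ i, 0 < fmax * Real.sqrt (c i) / ∑ j, Real.sqrt (c j)) ∧
    (∑ i, fmax * Real.sqrt (c i) / ∑ j, Real.sqrt (c j)) = fmax ∧
    (∑ i, c i / (fmax * Real.sqrt (c i) / ∑ j, Real.sqrt (c j))) =
      (∑ i, Real.sqrt (c i)) ^ 2 / fmax ∧
    ∀ f : ι → ℝ, (∀ i, 0 < f i) → (∑ i, f i) ≤ fmax →
      (∑ i, c i / (fmax * Real.sqrt (c i) / ∑ j, Real.sqrt (c j))) ≤ ∑ i, c i / f i := by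
  have hc₀ : ∀ i ∈ univ, 0 ≤ c i := fun i _ => (hc i).le
  have hsqrt : ∀ i, 0 < √(c i) := fun i => Real.sqrt_pos.2 (hc i)
  have hS : 0 < ∑ j, √(c j) := sum_pos (fun i _ => hsqrt i) univ_nonempty
  have hcost := sum_div_sqrt_allocation univ hc₀ fmax
  refine ⟨fun i => div_pos (mul_pos hfmax (hsqrt i)) hS,
    sum_mul_div_sum_self univ fmax hS.ne', hcost, fun f hf hsum => ?_⟩
  calc ∑ i, c i / (fmax * √(c i) / ∑ j, √(c j)) = (∑ i, √(c i)) ^ 2 / fmax := hcost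
    _ ≤ (∑ i, √(c i)) ^ 2 / ∑ i, f i :=
      div_le_div_of_nonneg_left (sq_nonneg _) (sum_pos (fun i _ => hf i) univ_nonempty) hsum
    _ ≤ ∑ i, c i / f i := sq_sum_sqrt_div_le_sum_div univ hc₀ fun i _ => hf i
end

section
/- Let U and S be finite types. Suppose that for each u ∈ U there is an injective ranking ρᵤ : S → ℕ (larger value means more preferred), and for each s ∈ S there is an injective ranking σₛ : U → ℕ. Call μ : U → Option S a matching if μ u = some s and μ u' = some s imply u = u'. Say a pair (u, s) blocks μ if μ u ≠ some s; and either μ u = none or μ u = some s' with ρᵤ(s) > ρᵤ(s'); and either no u' satisfies μ u' = some s, or there exists u' with μ u' = some s and σₛ(u) > σₛ(u'). Then there exists a matching μ admitting no blocking pair. -/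
/-!
Deferred acceptance, run one rejection at a time. A state records, for each user, the set of
subchannels that have rejected it, and each user proposes to its favourite subchannel among the
others. The invariant is that every rejection is justified: the rejecting subchannel currently
receives a proposal from a user it strictly prefers to the rejected one. Among the finitely many
justified states take a maximal one. There every subchannel ranks all of its proposers equally
high (otherwise it could justifiably reject one more), so by injectivity of its ranking it has at
most one, and the proposals form a matching. If `u` prefers `s` to its proposal, then `s` has
rejected `u`, so `s` is matched to a user it prefers to `u`: no pair blocks.
-/

namespace StableMatching

section Favourite

variable {S : Type*} [Fintype S] [DecidableEq S] {f : S → ℕ} {T : Finset S} {s : S}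

noncomputable def favouriteOutside (f : S → ℕ) (T : Finset S) : Option S :=
  if h : Tᶜ.Nonempty then some (Tᶜ.exists_max_image f h).choose else none

theorem notMem_of_favouriteOutside_eq_some (h : favouriteOutside f T = some s) : s ∉ T := by
  unfold favouriteOutside at h
  split_ifs at h with hT
  obtain rfl := Option.some_injective _ h
  exact Finset.mem_compl.mp (Tᶜ.exists_max_image f hT).choose_spec.1

theorem le_of_favouriteOutside_eq_some (h : favouriteOutside f T = some s) {t : S} (ht : t ∉ T) :
    f t ≤ f s := by
  unfold favouriteOutside at h
  split_ifs at h with hT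
  obtain rfl := Option.some_injective _ h
  exact (Tᶜ.exists_max_image f hT).choose_spec.2 t (Finset.mem_compl.mpr ht)

theorem mem_of_favouriteOutside_eq_none (h : favouriteOutside f T = none) (s : S) : s ∈ T := by
  unfold favouriteOutside at h
  split_ifs at h with hT
  rw [Finset.not_nonempty_iff_eq_empty, Finset.compl_eq_empty_iff] at hT
  exact hT ▸ Finset.mem_univ s

theorem mem_of_favouriteOutside_lt
    (h : favouriteOutside f T = none ∨ ∃ s', favouriteOutside f T = some s' ∧ f s' < f s) :
    s ∈ T := by
  rcases h with hnone | ⟨s', hs', hlt⟩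
  · exact mem_of_favouriteOutside_eq_none hnone s
  · by_contra hs
    exact hlt.not_ge (le_of_favouriteOutside_eq_some hs' hs)

end Favourite

section DeferredAcceptance

variable {U S : Type*} [Fintype S] [DecidableEq S] (ρ : U → S → ℕ) (σ : S → U → ℕ)

noncomputable def proposal (R : U → Finset S) (u : U) : Option S :=
  favouriteOutside (ρ u) (R u)

def RejectionsJustified (R : U → Finset S) : Prop :=
  ∀ u s, s ∈ R u → ∃ u', proposal ρ R u' = some s ∧ σ s u < σ s u'

def ProposalsHeld (R : U → Finset S) : Prop :=
  ∀ u u' s, proposal ρ R u = some s → proposal ρ R u' = some s → σ s u' ≤ σ s u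

variable {ρ σ}

theorem RejectionsJustified.reject [DecidableEq U] {R : U → Finset S}
    (hR : RejectionsJustified ρ σ R) {u u' : U} {s : S} (hu : proposal ρ R u = some s)
    (hu' : proposal ρ R u' = some s) (hlt : σ s u < σ s u') :
    RejectionsJustified ρ σ (Function.update R u (insert s (R u))) := by
  set R' := Function.update R u (insert s (R u))
  have proposal_of_ne : ∀ v ≠ u, proposal ρ R' v = proposal ρ R v := fun v hv => by
    simp only [proposal, R', Function.update_of_ne hv]
  have hu'_ne : u' ≠ u := by
    rintro rfl
    exact hlt.false
  have justified_old : ∀ v t, t ∈ R v → ∃ w, proposal ρ R' w = some t ∧ σ t v < σ t w := by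
    intro v t ht
    obtain ⟨w, hw, hvw⟩ := hR v t ht
    by_cases hwu : w = u
    · -- `u` no longer proposes to `t = s`, but the better rival `u'` still does.
      subst hwu
      obtain rfl : t = s := Option.some_injective _ (hw.symm.trans hu)
      exact ⟨u', (proposal_of_ne u' hu'_ne).trans hu', hvw.trans hlt⟩
    · exact ⟨w, (proposal_of_ne w hwu).trans hw, hvw⟩
  intro v t ht
  rw [show R' v = _ from Function.update_apply R u _ v] at ht
  split_ifs at ht with hvu
  · subst hvu
    rcases Finset.mem_insert.mp ht with rfl | ht
    · exact ⟨u', (proposal_of_ne u' hu'_ne).trans hu', hlt⟩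
    · exact justified_old v t ht
  · exact justified_old v t ht

theorem exists_rejectionsJustified_proposalsHeld [Finite U] :
    ∃ R : U → Finset S, RejectionsJustified ρ σ R ∧ ProposalsHeld ρ σ R := by
  classical
  obtain ⟨R, hRmax⟩ := exists_maximal_of_wellFoundedGT (RejectionsJustified ρ σ)
    ⟨fun _ => ∅, fun _ _ h => absurd h (Finset.notMem_empty _)⟩
  refine ⟨R, hRmax.prop, fun u u' s hu hu' => ?_⟩
  by_contra! hlt
  have hle : R ≤ Function.update R u (insert s (R u)) :=
    le_update_iff.mpr ⟨Finset.subset_insert s (R u), fun _ _ => le_rfl⟩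
  have hge := hRmax.2 (hRmax.prop.reject hu hu' hlt) hle
  have hs : s ∈ R u := by
    simpa using hge u (by simp)
  exact notMem_of_favouriteOutside_eq_some hu hs

end DeferredAcceptance

end StableMatching

open StableMatching in
theorem exists_stable_one_to_one_matching_general (U S : Type*) [Fintype U] [Fintype S]
    (ρ : U → S → ℕ) (σ : S → U → ℕ)
    (hσ : ∀ s, Function.Injective (σ s)) :
    ∃ μ : U → Option S,
      (∀ u u' s, μ u = some s → μ u' = some s → u = u') ∧
      ¬ ∃ (u : U) (s : S),
          μ u ≠ some s ∧
          (μ u = none ∨ ∃ s', μ u = some s' ∧ ρ u s' < ρ u s) ∧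
          ((¬ ∃ u', μ u' = some s) ∨ ∃ u', μ u' = some s ∧ σ s u' < σ s u) := by
  classical
  obtain ⟨R, hjustified, hheld⟩ := exists_rejectionsJustified_proposalsHeld (ρ := ρ) (σ := σ)
  refine ⟨proposal ρ R, fun u u' s hu hu' => hσ s ((hheld u' u s hu' hu).antisymm
    (hheld u u' s hu hu')), ?_⟩
  rintro ⟨u, s, -, hprefers, hpartner⟩
  obtain ⟨u₁, hu₁, hlt⟩ := hjustified u s (mem_of_favouriteOutside_lt hprefers)
  rcases hpartner with hunmatched | ⟨u', hu', hlt'⟩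
  · exact hunmatched ⟨u₁, hu₁⟩
  · exact (hlt'.trans hlt).not_ge (hheld u' u₁ s hu' hu₁)

/-- Existence of a stable one-to-one matching for any finite two-sided market
with strict preferences (users × subchannels). -/
theorem exists_stable_one_to_one_matching (U S : Type*) [Fintype U] [Fintype S]
    (ρ : U → S → ℕ) (σ : S → U → ℕ)
    (hρ : ∀ u, Function.Injective (ρ u)) (hσ : ∀ s, Function.Injective (σ s)) :
    ∃ μ : U → Option S,
      (∀ u u' s, μ u = some s → μ u' = some s → u = u') ∧
      ¬ ∃ (u : U) (s : S),
          μ u ≠ some s ∧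
          (μ u = none ∨ ∃ s', μ u = some s' ∧ ρ u s' < ρ u s) ∧
          ((¬ ∃ u', μ u' = some s) ∨ ∃ u', μ u' = some s ∧ σ s u' < σ s u) :=
  exists_stable_one_to_one_matching_general U S ρ σ hσ
end

section
/- Let N (users) and M (servers) be finite types and q : M → ℕ a quota function. Suppose that for each n ∈ N there is an injective ranking ρₙ : M → ℕ (larger value means more preferred), and for each m ∈ M there is an injective ranking σₘ : N → ℕ. Call μ : N → Option M a matching if for each m ∈ M the number of n with μ n = some m is at most q m. Say a pair (n, m) blocks μ if μ n ≠ some m; and either μ n = none or μ n = some m' with ρₙ(m) > ρₙ(m'); and either the number of users n' with μ n' = some m is strictly less than q m, or there exists n' with μ n' = some m and σₘ(n) > σₘ(n'). Then there exists a matching μ admitting no blocking pair. -/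
/-!
Deferred acceptance, run on the family `R n` of servers that have already rejected user `n`: every
user proposes to its favourite server among those that have not rejected it. The invariant is that
a server `m` which rejected `n` receives proposals from at least `q m` users it ranks above `n`.
If no server is over quota, the proposals form a matching, and the invariant excludes every
blocking pair. Otherwise an over-full server rejects its least preferred proposer; since server
rankings are strict, everyone else proposing to it is ranked above that user, so the invariant
survives while the rejection sets strictly grow, and there are only finitely many of them.
-/

open Finset Function

theorem le_card_filter_erase_of_forall_lt {α β : Type*} [DecidableEq α] [LinearOrder β]
    {s : α → β} {P : Finset α} {a₀ a : α} {k : ℕ} (hk : k < #P) (ha₀ : a₀ ∈ P)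
    (hmin : ∀ a' ∈ P, a' ≠ a₀ → s a₀ < s a')
    (habove : s a₀ < s a → k ≤ #{a' ∈ P | s a < s a'}) :
    k ≤ #{a' ∈ P.erase a₀ | s a < s a'} := by
  rcases le_or_gt (s a) (s a₀) with hle | hlt
  · have hall : {a' ∈ P.erase a₀ | s a < s a'} = P.erase a₀ :=
      filter_true_of_mem fun a' ha' =>
        hle.trans_lt (hmin a' (mem_of_mem_erase ha') (ne_of_mem_erase ha'))
    rw [hall, card_erase_of_mem ha₀]
    omega
  · rw [filter_erase, erase_eq_of_notMem (by simp [hlt.le])]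
    exact habove hlt

namespace ManyToOneMatching

variable {N M : Type*} [DecidableEq M]

section Stability

variable [Fintype N]

def IsBlockingPair (q : M → ℕ) (ρ : N → M → ℕ) (σ : M → N → ℕ) (μ : N → Option M)
    (n : N) (m : M) : Prop :=
  μ n ≠ some m ∧
    (μ n = none ∨ ∃ m', μ n = some m' ∧ ρ n m' < ρ n m) ∧
    (#{n' | μ n' = some m} < q m ∨ ∃ n', μ n' = some m ∧ σ m n' < σ m n)

def IsStableMatching (q : M → ℕ) (ρ : N → M → ℕ) (σ : M → N → ℕ) (μ : N → Option M) : Prop :=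
  (∀ m, #{n | μ n = some m} ≤ q m) ∧ ∀ n m, ¬IsBlockingPair q ρ σ μ n m

end Stability

section DeferredAcceptance

variable [Fintype M] (q : M → ℕ) (ρ : N → M → ℕ) (σ : M → N → ℕ)

noncomputable def proposal (R : N → Finset M) (n : N) : Option M :=
  (R n)ᶜ.toList.argmax (ρ n)

variable {ρ}

theorem notMem_of_proposal_eq_some {R : N → Finset M} {n : N} {m : M}
    (h : proposal ρ R n = some m) : m ∉ R n := by
  simpa using List.argmax_mem h

theorem exists_proposal_eq_some_of_notMem {R : N → Finset M} {n : N} {m : M} (hm : m ∉ R n) :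
    ∃ m', proposal ρ R n = some m' ∧ ρ n m ≤ ρ n m' := by
  have hmem : m ∈ (R n)ᶜ.toList := by simpa using hm
  obtain ⟨m', hm'⟩ := Option.ne_none_iff_exists'.mp
    (mt (List.argmax_eq_none (f := ρ n)).mp (List.ne_nil_of_mem hmem))
  exact ⟨m', hm', List.le_of_mem_argmax hmem hm'⟩

theorem proposal_update_of_ne [DecidableEq N] {R : N → Finset M} {n₀ n : N} (s : Finset M)
    (hn : n ≠ n₀) : proposal ρ (update R n₀ s) n = proposal ρ R n := by
  simp [proposal, update_of_ne hn]

variable [Fintype N] (ρ)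

noncomputable def proposers (R : N → Finset M) (m : M) : Finset N :=
  {n | proposal ρ R n = some m}

def RejectionsJustified (R : N → Finset M) : Prop :=
  ∀ n m, m ∈ R n → q m ≤ #{n' ∈ proposers ρ R m | σ m n < σ m n'}

variable {ρ}

theorem mem_proposers {R : N → Finset M} {m : M} {n : N} :
    n ∈ proposers ρ R m ↔ proposal ρ R n = some m := by
  simp [proposers]

theorem isStableMatching_proposal {R : N → Finset M} (hR : RejectionsJustified q ρ σ R)
    (hcap : ∀ m, #(proposers ρ R m) ≤ q m) : IsStableMatching q ρ σ (proposal ρ R) := by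
  refine ⟨hcap, fun n m ⟨_, hpref, hroom⟩ => ?_⟩
  by_cases hmR : m ∈ R n
  · have hfull : {n' ∈ proposers ρ R m | σ m n < σ m n'} = proposers ρ R m :=
      eq_of_subset_of_card_le (filter_subset _ _) ((hcap m).trans (hR n m hmR))
    rcases hroom with hlt | ⟨n', hn', hworse⟩
    · have := hR n m hmR
      rw [hfull] at this
      exact absurd hlt (not_lt.mpr this)
    · have hn'P : n' ∈ proposers ρ R m := mem_proposers.mpr hn'
      rw [← hfull] at hn'P
      exact absurd (mem_filter.mp hn'P).2 (not_lt.mpr hworse.le)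
  · obtain ⟨m', hm', hle⟩ := exists_proposal_eq_some_of_notMem (ρ := ρ) hmR
    rw [hm'] at hpref
    rcases hpref with h | ⟨m'', h, hlt⟩
    · exact Option.some_ne_none _ h
    · cases h
      omega

variable [DecidableEq N]

theorem erase_proposers_subset_proposers_update (R : N → Finset M) (n₀ : N) (s : Finset M)
    (m : M) : (proposers ρ R m).erase n₀ ⊆ proposers ρ (update R n₀ s) m := fun n hn => by
  rw [mem_erase, mem_proposers] at hn
  rw [mem_proposers, proposal_update_of_ne s hn.1]
  exact hn.2

theorem rejectionsJustified_update_insert {R : N → Finset M} (hR : RejectionsJustified q ρ σ R)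
    {m₀ : M} {n₀ : N} (hover : q m₀ < #(proposers ρ R m₀)) (hn₀ : n₀ ∈ proposers ρ R m₀)
    (hmin : ∀ n ∈ proposers ρ R m₀, n ≠ n₀ → σ m₀ n₀ < σ m₀ n) :
    RejectionsJustified q ρ σ (update R n₀ (insert m₀ (R n₀))) := by
  intro n m hm
  refine le_trans ?_ (card_le_card (filter_subset_filter _
    (erase_proposers_subset_proposers_update R n₀ _ m)))
  by_cases hm₀ : m = m₀
  · subst hm₀
    refine le_card_filter_erase_of_forall_lt hover hn₀ hmin fun hlt => hR n m ?_
    have hn : n ≠ n₀ := by rintro rfl; exact lt_irrefl _ hlt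
    simpa [update_of_ne hn] using hm
  · have hn₀m : n₀ ∉ proposers ρ R m := fun h =>
      hm₀ (Option.some_injective _ ((mem_proposers.mp h).symm.trans (mem_proposers.mp hn₀)))
    rw [erase_eq_of_notMem hn₀m]
    apply hR n m
    rcases eq_or_ne n n₀ with rfl | hn
    · simpa [hm₀] using hm
    · simpa [update_of_ne hn] using hm

theorem exists_rejectionsJustified_gt (hσ : ∀ m, Injective (σ m)) {R : N → Finset M}
    (hR : RejectionsJustified q ρ σ R) {m₀ : M} (hover : q m₀ < #(proposers ρ R m₀)) :
    ∃ R', R < R' ∧ RejectionsJustified q ρ σ R' := by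
  obtain ⟨n₀, hn₀, hmin⟩ := exists_min_image (proposers ρ R m₀) (σ m₀) (card_pos.mp (by omega))
  have hm₀ : m₀ ∉ R n₀ := notMem_of_proposal_eq_some (mem_proposers.mp hn₀)
  refine ⟨update R n₀ (insert m₀ (R n₀)), lt_update_self_iff.mpr (ssubset_insert hm₀),
    rejectionsJustified_update_insert q σ hR hover hn₀ fun n hn hne => ?_⟩
  exact (hmin n hn).lt_of_ne fun h => hne (hσ m₀ h).symm

end DeferredAcceptance

theorem exists_isStableMatching [Fintype N] [Fintype M] (q : M → ℕ) (ρ : N → M → ℕ)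
    (σ : M → N → ℕ) (hσ : ∀ m, Injective (σ m)) : ∃ μ, IsStableMatching q ρ σ μ := by
  classical
  suffices ∀ R, RejectionsJustified q ρ σ R → ∃ μ, IsStableMatching q ρ σ μ from
    this ⊥ fun _ _ h => absurd h (notMem_empty _)
  intro R
  induction R using WellFoundedGT.induction with
  | _ R ih =>
    intro hR
    by_cases hcap : ∀ m, #(proposers ρ R m) ≤ q m
    · exact ⟨_, isStableMatching_proposal q σ hR hcap⟩
    · obtain ⟨m₀, hover⟩ := not_forall.mp hcap
      obtain ⟨R', hlt, hR'⟩ := exists_rejectionsJustified_gt q σ hσ hR (not_le.mp hover)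
      exact ih R' hlt hR'

end ManyToOneMatching

theorem exists_stable_many_to_one_matching_general (N M : Type*) [Fintype N] [Fintype M]
    [DecidableEq M] (q : M → ℕ)
    (ρ : N → M → ℕ) (σ : M → N → ℕ)
    (hσ : ∀ m, Function.Injective (σ m)) :
    ∃ μ : N → Option M,
      (∀ m : M, (Finset.univ.filter fun n => μ n = some m).card ≤ q m) ∧
      ¬ ∃ (n : N) (m : M),
          μ n ≠ some m ∧
          (μ n = none ∨ ∃ m', μ n = some m' ∧ ρ n m' < ρ n m) ∧
          ((Finset.univ.filter fun n' => μ n' = some m).card < q m ∨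
            ∃ n', μ n' = some m ∧ σ m n' < σ m n) := by
  obtain ⟨μ, hcap, hstable⟩ := ManyToOneMatching.exists_isStableMatching q ρ σ hσ
  exact ⟨μ, hcap, fun ⟨n, m, hblock⟩ => hstable n m hblock⟩

/-- Existence of a stable many-to-one matching with quotas for any finite
two-sided market with strict preferences (users × MEC servers). -/
theorem exists_stable_many_to_one_matching (N M : Type*) [Fintype N] [Fintype M]
    [DecidableEq N] [DecidableEq M] (q : M → ℕ)
    (ρ : N → M → ℕ) (σ : M → N → ℕ)
    (hρ : ∀ n, Function.Injective (ρ n)) (hσ : ∀ m, Function.Injective (σ m)) :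
    ∃ μ : N → Option M,
      (∀ m : M, (Finset.univ.filter fun n => μ n = some m).card ≤ q m) ∧
      ¬ ∃ (n : N) (m : M),
          μ n ≠ some m ∧
          (μ n = none ∨ ∃ m', μ n = some m' ∧ ρ n m' < ρ n m) ∧
          ((Finset.univ.filter fun n' => μ n' = some m).card < q m ∨
            ∃ n', μ n' = some m ∧ σ m n' < σ m n) :=
  exists_stable_many_to_one_matching_general N M q ρ σ hσ
end
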